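/- arXiv:1704.04007 — 2 statements merged into one kernel-verified Lean document; each statement's English description precedes it below -/
import Mathlib

section
/- Let M = (ρ, E) be a matroid and let Z(M) be its collection of cyclic flats. Then for every X ⊆ E, ρ(X) = min{ρ(F) + |X \ F| : F ∈ Z(M)}. -/
/-- A matroid given by an integer-valued rank function on subsets of a finite ground set. -/
structure RankMatroid (α : Type) [DecidableEq α] where
  E : Finset α
  rk : Finset α → ℤ
  rk_nonneg : ∀ X : Finset α, X ⊆ E → 0 ≤ rk X
  rk_le_card : ∀ X : Finset α, X ⊆ E → rk X ≤ X.card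
  rk_mono : ∀ X Y : Finset α, X ⊆ Y → Y ⊆ E → rk X ≤ rk Y
  rk_submod : ∀ X Y : Finset α, X ⊆ E → Y ⊆ E → rk (X ∪ Y) + rk (X ∩ Y) ≤ rk X + rk Y

namespace RankMatroid

variable {α : Type} [DecidableEq α]

/-- The minimum distance `d_X` of the restriction to `X`:
`d_X = min {|Y| : Y ⊆ X, ρ(X \ Y) < ρ(X)}`. -/
noncomputable def dist (M : RankMatroid α) (X : Finset α) : ℕ :=
  sInf {m : ℕ | ∃ Y : Finset α, Y ⊆ X ∧ Y.card = m ∧ M.rk (X \ Y) < M.rk X}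

/-- Closure: `cl(X) = {y ∈ E : ρ(X ∪ {y}) = ρ(X)}`. -/
def cl (M : RankMatroid α) (X : Finset α) : Finset α :=
  M.E.filter fun y => M.rk (insert y X) = M.rk X

/-- `X` is cyclic if `ρ(X \ {x}) = ρ(X)` for every `x ∈ X`. -/
def Cyclic (M : RankMatroid α) (X : Finset α) : Prop :=
  ∀ x ∈ X, M.rk (X.erase x) = M.rk X

/-- Cyclic core: `cyc(X) = {x ∈ X : ρ(X \ {x}) = ρ(X)}`. -/
def cyc (M : RankMatroid α) (X : Finset α) : Finset α :=
  X.filter fun x => M.rk (X.erase x) = M.rk X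

/-- A cyclic flat is a set which is both cyclic and a flat. -/
def IsCyclicFlat (M : RankMatroid α) (X : Finset α) : Prop :=
  X ⊆ M.E ∧ M.Cyclic X ∧ M.cl X = X

/-- `Z(M)`: the collection of cyclic flats of `M`. -/
def Z (M : RankMatroid α) : Set (Finset α) := {X | M.IsCyclicFlat X}

/-- `M` is non-degenerate: every singleton has rank at least one and `d ≥ 2`. -/
def NonDegenerate (M : RankMatroid α) : Prop :=
  (∀ x ∈ M.E, 1 ≤ M.rk {x}) ∧ 2 ≤ M.dist M.E

/-- `R` is a repair set for `x` with parameters `(r, δ)`. -/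
def IsRepairSet (M : RankMatroid α) (r δ : ℤ) (x : α) (R : Finset α) : Prop :=
  R ⊆ M.E ∧ x ∈ R ∧ (R.card : ℤ) ≤ r + δ - 1 ∧ δ ≤ (M.dist R : ℤ)

/-- The collection of cyclic flats of the restriction `M|X`. -/
def ZIn (M : RankMatroid α) (X : Finset α) : Set (Finset α) :=
  {Y | Y ⊆ X ∧ M.Cyclic Y ∧ X.filter (fun z => M.rk (insert z Y) = M.rk Y) = Y}

/-- `FX` is the meet, in the lattice `(Z(M), ⊆)`, of all cyclic flats containing `X`. -/
def IsMeetOfFlatsContaining (M : RankMatroid α) (X FX : Finset α) : Prop :=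
  FX ∈ M.Z ∧ (∀ F ∈ M.Z, X ⊆ F → FX ⊆ F) ∧
    ∀ W ∈ M.Z, (∀ F ∈ M.Z, X ⊆ F → W ⊆ F) → W ⊆ FX

end RankMatroid

/-! Adding one element raises the rank by at most one, so `ρ(X) ≤ ρ(F) + |X \ F|` for every
`F ⊆ E`. For equality, take `Y ⊆ X` of least size with `ρ(Y) + |X \ Y| ≤ ρ(X)`: it is cyclic, and
its closure is a cyclic flat of the same rank which still contains `Y`, so it attains the bound. -/

namespace RankMatroid

variable {α : Type} [DecidableEq α] (M : RankMatroid α)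

lemma rk_insert_le {S : Finset α} {b : α} (h : insert b S ⊆ M.E) :
    M.rk (insert b S) ≤ M.rk S + 1 := by
  have hS : S ⊆ M.E := (Finset.subset_insert b S).trans h
  have hb : {b} ⊆ M.E := Finset.singleton_subset_iff.mpr (h (Finset.mem_insert_self b S))
  have hsub := M.rk_submod S {b} hS hb
  have h1 : M.rk {b} ≤ 1 := by simpa using M.rk_le_card {b} hb
  have h0 : 0 ≤ M.rk (S ∩ {b}) := M.rk_nonneg _ (Finset.inter_subset_left.trans hS)
  rw [Finset.union_comm, ← Finset.insert_eq] at hsub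
  linarith

lemma rk_union_le_add_card (A : Finset α) {B : Finset α} (h : A ∪ B ⊆ M.E) :
    M.rk (A ∪ B) ≤ M.rk A + B.card := by
  induction B using Finset.induction_on with
  | empty => simp
  | @insert b B hb ih =>
    rw [Finset.union_insert] at h ⊢
    have h1 := M.rk_insert_le h
    have h2 := ih ((Finset.subset_insert b _).trans h)
    rw [Finset.card_insert_of_notMem hb]
    push_cast
    linarith

lemma rk_le_rk_add_card_sdiff {X F : Finset α} (hX : X ⊆ M.E) (hF : F ⊆ M.E) :
    M.rk X ≤ M.rk F + (X \ F).card := by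
  have hE : F ∪ (X \ F) ⊆ M.E := by
    rw [Finset.union_sdiff_self_eq_union]
    exact Finset.union_subset hF hX
  calc M.rk X ≤ M.rk (F ∪ (X \ F)) := by
        refine M.rk_mono _ _ ?_ hE
        rw [Finset.union_sdiff_self_eq_union]
        exact Finset.subset_union_right
    _ ≤ M.rk F + (X \ F).card := M.rk_union_le_add_card F hE

lemma cl_subset_E (A : Finset α) : M.cl A ⊆ M.E :=
  Finset.filter_subset _ _

lemma subset_cl {A : Finset α} (hA : A ⊆ M.E) : A ⊆ M.cl A := fun x hx =>
  Finset.mem_filter.mpr ⟨hA hx, by rw [Finset.insert_eq_self.mpr hx]⟩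

lemma rk_union_eq_of_subset_cl {A S : Finset α} (hA : A ⊆ M.E) (hS : S ⊆ M.cl A) :
    M.rk (A ∪ S) = M.rk A := by
  induction S using Finset.induction_on with
  | empty => simp
  | @insert b B hb ih =>
    have hbcl : b ∈ M.cl A := hS (Finset.mem_insert_self b B)
    have hBcl : B ⊆ M.cl A := (Finset.subset_insert b B).trans hS
    have hbrk : M.rk (insert b A) = M.rk A := (Finset.mem_filter.mp hbcl).2
    have hbA : insert b A ⊆ M.E := Finset.insert_subset (M.cl_subset_E A hbcl) hA
    have hAB : A ∪ B ⊆ M.E := Finset.union_subset hA (hBcl.trans (M.cl_subset_E A))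
    have hu : (A ∪ B) ∪ insert b A = A ∪ insert b B := by
      ext y
      simp only [Finset.mem_union, Finset.mem_insert]
      tauto
    have hABE : A ∪ insert b B ⊆ M.E := hu ▸ Finset.union_subset hAB hbA
    have hsub := M.rk_submod (A ∪ B) (insert b A) hAB hbA
    rw [hu, ih hBcl, hbrk] at hsub
    have hinter : M.rk A ≤ M.rk ((A ∪ B) ∩ insert b A) :=
      M.rk_mono _ _ (Finset.subset_inter Finset.subset_union_left (Finset.subset_insert b A))
        (Finset.inter_subset_left.trans hAB)
    have hge : M.rk A ≤ M.rk (A ∪ insert b B) :=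
      M.rk_mono _ _ Finset.subset_union_left hABE
    linarith

lemma rk_cl {A : Finset α} (hA : A ⊆ M.E) : M.rk (M.cl A) = M.rk A := by
  simpa [Finset.union_eq_right.mpr (M.subset_cl hA)] using
    M.rk_union_eq_of_subset_cl hA (subset_refl (M.cl A))

lemma cl_cl {A : Finset α} (hA : A ⊆ M.E) : M.cl (M.cl A) = M.cl A := by
  refine Finset.Subset.antisymm (fun y hy => ?_) (M.subset_cl (M.cl_subset_E A))
  obtain ⟨hyE, hy⟩ := Finset.mem_filter.mp hy
  refine Finset.mem_filter.mpr ⟨hyE, le_antisymm ?_ ?_⟩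
  · calc M.rk (insert y A) ≤ M.rk (insert y (M.cl A)) :=
          M.rk_mono _ _ (Finset.insert_subset_insert y (M.subset_cl hA))
            (Finset.insert_subset hyE (M.cl_subset_E A))
      _ = M.rk A := by rw [hy, M.rk_cl hA]
  · exact M.rk_mono _ _ (Finset.subset_insert y A) (Finset.insert_subset hyE hA)

variable {M} in
lemma Cyclic.cl {A : Finset α} (hA : A ⊆ M.E) (hc : M.Cyclic A) : M.Cyclic (M.cl A) := by
  intro x _
  have hAx : M.rk (A.erase x) = M.rk A := by
    by_cases hxA : x ∈ A
    · exact hc x hxA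
    · rw [Finset.erase_eq_of_notMem hxA]
  refine le_antisymm (M.rk_mono _ _ (Finset.erase_subset x _) (M.cl_subset_E A)) ?_
  calc M.rk (M.cl A) = M.rk (A.erase x) := by rw [M.rk_cl hA, hAx]
    _ ≤ M.rk ((M.cl A).erase x) :=
        M.rk_mono _ _ (Finset.erase_subset_erase x (M.subset_cl hA))
          ((Finset.erase_subset x _).trans (M.cl_subset_E A))

variable {M} in
lemma Cyclic.cl_mem_Z {A : Finset α} (hA : A ⊆ M.E) (hc : M.Cyclic A) : M.cl A ∈ M.Z :=
  ⟨M.cl_subset_E A, hc.cl hA, M.cl_cl hA⟩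

/-- A smallest `Y ⊆ X` with `ρ(Y) + |X \ Y| ≤ ρ(X)` is cyclic: deleting an element `y` that
lowers the rank of `Y` would keep the inequality and shrink `Y`. -/
lemma exists_cyclic_subset_rk_add_card_sdiff_le {X : Finset α} (hX : X ⊆ M.E) :
    ∃ Y ⊆ X, M.Cyclic Y ∧ M.rk Y + (X \ Y).card ≤ M.rk X := by
  set S := X.powerset.filter fun Y => M.rk Y + (X \ Y).card ≤ M.rk X
  have hXS : X ∈ S := by simp [S]
  obtain ⟨Y, hYS, hYmin⟩ := S.exists_min_image Finset.card ⟨X, hXS⟩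
  obtain ⟨hYX, hY⟩ : Y ⊆ X ∧ M.rk Y + (X \ Y).card ≤ M.rk X := by
    simpa [S] using hYS
  refine ⟨Y, hYX, fun y hy => ?_, hY⟩
  refine le_antisymm (M.rk_mono _ _ (Finset.erase_subset y Y) (hYX.trans hX)) ?_
  by_contra! hlt
  have hcard : (X \ Y.erase y).card = (X \ Y).card + 1 := by
    rw [Finset.sdiff_erase (hYX hy), Finset.card_insert_of_notMem (by simp [hy])]
  have hmem : Y.erase y ∈ S := by
    simp only [S, Finset.mem_filter, Finset.mem_powerset]
    refine ⟨(Finset.erase_subset y Y).trans hYX, ?_⟩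
    push_cast [hcard]
    linarith
  have := hYmin _ hmem
  rw [Finset.card_erase_of_mem hy] at this
  have := Finset.card_pos.mpr ⟨y, hy⟩
  omega

end RankMatroid

/-- `ρ(X) = min {ρ(F) + |X \ F| : F ∈ Z(M)}` for every `X ⊆ E`. -/
theorem stmt2 {α : Type} [DecidableEq α] (M : RankMatroid α)
    (X : Finset α) (hX : X ⊆ M.E) :
    IsLeast {v : ℤ | ∃ F ∈ M.Z, v = M.rk F + (((X \ F).card : ℤ))} (M.rk X) := by
  refine ⟨?_, ?_⟩
  · obtain ⟨Y, hYX, hYc, hY⟩ := M.exists_cyclic_subset_rk_add_card_sdiff_le hX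
    have hYE : Y ⊆ M.E := hYX.trans hX
    refine ⟨M.cl Y, hYc.cl_mem_Z hYE, le_antisymm ?_ ?_⟩
    · exact M.rk_le_rk_add_card_sdiff hX (M.cl_subset_E Y)
    · rw [M.rk_cl hYE]
      have : (X \ M.cl Y).card ≤ (X \ Y).card :=
        Finset.card_le_card (Finset.sdiff_subset_sdiff subset_rfl (M.subset_cl hYE))
      omega
  · rintro v ⟨F, ⟨hFE, -, -⟩, rfl⟩
    exact M.rk_le_rk_add_card_sdiff hX hFE
end

section
/- Let M = (ρ, E) be a matroid with ∅ ∈ Z(M) and E ∈ Z(M), and let X ⊆ E be a nonempty cyclic set of M. Then the minimum distance of the restriction M|X satisfies d_X = |X| − ρ(X) + 1 − max{η(Y) : Y ∈ Z(M|X), Y ≠ X}, where η(Y) = |Y| − ρ(Y) and Z(M|X) is the collection of cyclic flats of the restriction M|X. In particular, taking X = E, d = n − k + 1 − max{η(Z) : Z ∈ Z(M), Z ≠ E}. -/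
/-!
If `T ⊆ X` has `ρ(T) < ρ(X)`, passing to the cyclic core of `T` and then to its closure in `M|X`
does not decrease the nullity and yields a proper cyclic flat of `M|X`, so `η(T) ≤ m`. Conversely,
a proper cyclic flat of nullity `m` has rank below `ρ(X)` and extends inside `X`, at constant
nullity, to some `T` of rank `ρ(X) - 1`. Since `d_X = |X| - max {|T| : T ⊆ X, ρ(T) < ρ(X)}` and
`|T| = η(T) + ρ(T) ≤ m + ρ(X) - 1`, with equality for that `T`, the formula follows.
-/

namespace RankMatroid

variable {α : Type} [DecidableEq α] (M : RankMatroid α)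

def nullity (X : Finset α) : ℤ := X.card - M.rk X

def clIn (X Y : Finset α) : Finset α :=
  X.filter fun z => M.rk (insert z Y) = M.rk Y

variable {M}

section Rank

variable {A : Finset α}

lemma rk_insert_le_add_one (hA : A ⊆ M.E) {z : α} (hz : z ∈ M.E) :
    M.rk (insert z A) ≤ M.rk A + 1 := by
  have hsub := M.rk_submod {z} A (by simpa using hz) hA
  have hz1 : M.rk {z} ≤ 1 := by simpa using M.rk_le_card {z} (by simpa using hz)
  have hinter : 0 ≤ M.rk ({z} ∩ A) := M.rk_nonneg _ (Finset.inter_subset_right.trans hA)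
  rw [← Finset.insert_eq] at hsub
  linarith

lemma rk_le_rk_insert (hA : A ⊆ M.E) {z : α} (hz : z ∈ M.E) :
    M.rk A ≤ M.rk (insert z A) :=
  M.rk_mono _ _ (Finset.subset_insert z A) (Finset.insert_subset hz hA)

lemma rk_erase_le (hA : A ⊆ M.E) (x : α) : M.rk (A.erase x) ≤ M.rk A :=
  M.rk_mono _ A (Finset.erase_subset x A) hA

lemma rk_erase_eq_sub_one (hA : A ⊆ M.E) {x : α} (hx : x ∈ A)
    (hne : M.rk (A.erase x) ≠ M.rk A) : M.rk (A.erase x) = M.rk A - 1 := by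
  have := rk_insert_le_add_one ((Finset.erase_subset x A).trans hA) (hA hx)
  rw [Finset.insert_erase hx] at this
  have := rk_erase_le hA x
  omega

lemma rk_union_eq_of_forall_rk_insert_eq (hA : A ⊆ M.E) {S : Finset α} (hS : S ⊆ M.E)
    (h : ∀ z ∈ S, M.rk (insert z A) = M.rk A) : M.rk (A ∪ S) = M.rk A := by
  induction S using Finset.induction_on with
  | empty => simp
  | @insert z S _ ih =>
    have hzE : z ∈ M.E := hS (Finset.mem_insert_self z S)
    have hSE : S ⊆ M.E := (Finset.subset_insert z S).trans hS
    have hAS : M.rk (A ∪ S) = M.rk A :=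
      ih hSE fun y hy => h y (Finset.mem_insert_of_mem hy)
    have hzA : M.rk (insert z A) = M.rk A := h z (Finset.mem_insert_self z S)
    have hsub := M.rk_submod (insert z A) (A ∪ S) (Finset.insert_subset hzE hA)
      (Finset.union_subset hA hSE)
    rw [show insert z A ∪ (A ∪ S) = A ∪ insert z S by ext; simp] at hsub
    have h₁ : M.rk A ≤ M.rk (insert z A ∩ (A ∪ S)) :=
      M.rk_mono _ _ (Finset.subset_inter (Finset.subset_insert z A) Finset.subset_union_left)
        (Finset.inter_subset_left.trans (Finset.insert_subset hzE hA))
    have h₂ : M.rk A ≤ M.rk (A ∪ insert z S) :=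
      M.rk_mono _ _ Finset.subset_union_left (Finset.union_subset hA hS)
    linarith

end Rank

section Closure

variable {X Y : Finset α}

lemma subset_clIn (hYX : Y ⊆ X) : Y ⊆ M.clIn X Y := fun z hz =>
  Finset.mem_filter.2 ⟨hYX hz, by rw [Finset.insert_eq_self.2 hz]⟩

lemma rk_clIn (hYX : Y ⊆ X) (hX : X ⊆ M.E) : M.rk (M.clIn X Y) = M.rk Y := by
  have h := rk_union_eq_of_forall_rk_insert_eq (S := M.clIn X Y) (hYX.trans hX)
    ((Finset.filter_subset _ X).trans hX) fun z hz => (Finset.mem_filter.1 hz).2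
  rwa [Finset.union_eq_right.2 (subset_clIn hYX)] at h

lemma clIn_clIn (hYX : Y ⊆ X) (hX : X ⊆ M.E) : M.clIn X (M.clIn X Y) = M.clIn X Y := by
  refine Finset.Subset.antisymm (fun z hz => ?_) (subset_clIn (Finset.filter_subset _ X))
  obtain ⟨hzX, hz⟩ := Finset.mem_filter.1 hz
  have hYE : Y ⊆ M.E := hYX.trans hX
  have h₁ : M.rk (insert z Y) ≤ M.rk (insert z (M.clIn X Y)) :=
    M.rk_mono _ _ (Finset.insert_subset_insert z (subset_clIn hYX))
      (Finset.insert_subset (hX hzX) ((Finset.filter_subset _ X).trans hX))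
  have h₂ := rk_le_rk_insert hYE (hX hzX)
  rw [rk_clIn hYX hX] at hz
  exact Finset.mem_filter.2 ⟨hzX, by omega⟩

lemma cyclic_clIn (hYX : Y ⊆ X) (hX : X ⊆ M.E) (hY : M.Cyclic Y) : M.Cyclic (M.clIn X Y) := by
  intro x _
  have hclE : M.clIn X Y ⊆ M.E := (Finset.filter_subset _ X).trans hX
  have hYx : M.rk (Y.erase x) = M.rk Y := by
    by_cases hxY : x ∈ Y
    · exact hY x hxY
    · rw [Finset.erase_eq_of_notMem hxY]
  have hle : M.rk (Y.erase x) ≤ M.rk ((M.clIn X Y).erase x) :=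
    M.rk_mono _ _ (Finset.erase_subset_erase x (subset_clIn hYX))
      ((Finset.erase_subset x _).trans hclE)
  have := rk_erase_le hclE x
  rw [rk_clIn hYX hX] at this ⊢
  omega

lemma clIn_mem_ZIn (hYX : Y ⊆ X) (hX : X ⊆ M.E) (hY : M.Cyclic Y) : M.clIn X Y ∈ M.ZIn X :=
  ⟨Finset.filter_subset _ X, cyclic_clIn hYX hX hY, clIn_clIn hYX hX⟩

lemma rk_lt_of_mem_ZIn (hX : X ⊆ M.E) (hY : Y ∈ M.ZIn X) (hYX : Y ≠ X) : M.rk Y < M.rk X := by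
  obtain ⟨hYsub, -, hflat⟩ := hY
  obtain ⟨z, hzX, hzY⟩ := Finset.exists_of_ssubset (Finset.ssubset_iff_subset_ne.2 ⟨hYsub, hYX⟩)
  have hne : M.rk (insert z Y) ≠ M.rk Y := fun h =>
    hzY (hflat ▸ Finset.mem_filter.2 ⟨hzX, h⟩)
  have := rk_le_rk_insert (hYsub.trans hX) (hX hzX)
  have := rk_insert_le_add_one (hYsub.trans hX) (hX hzX)
  have : M.rk (insert z Y) ≤ M.rk X := M.rk_mono _ _ (Finset.insert_subset hzX hYsub) hX
  omega

end Closure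

section Extension

variable {X Y : Finset α}

lemma exists_rk_insert_eq_add_one (hYX : Y ⊆ X) (hX : X ⊆ M.E) (h : M.rk Y < M.rk X) :
    ∃ z ∈ X, z ∉ Y ∧ M.rk (insert z Y) = M.rk Y + 1 := by
  by_contra! hc
  have hcl : M.clIn X Y = X := by
    refine Finset.filter_true_of_mem fun z hz => ?_
    by_cases hzY : z ∈ Y
    · rw [Finset.insert_eq_self.2 hzY]
    · have := hc z hz hzY
      have := rk_insert_le_add_one (hYX.trans hX) (hX hz)
      have := rk_le_rk_insert (hYX.trans hX) (hX hz)
      omega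
  have := rk_clIn hYX hX
  rw [hcl] at this
  omega

lemma exists_superset_rk_eq (hYX : Y ⊆ X) (hX : X ⊆ M.E) {r : ℤ} (hYr : M.rk Y ≤ r)
    (hrX : r ≤ M.rk X) :
    ∃ T, Y ⊆ T ∧ T ⊆ X ∧ M.rk T = r ∧ M.nullity T = M.nullity Y := by
  induction r, hYr using Int.leInduction with
  | base => exact ⟨Y, le_rfl, hYX, rfl, rfl⟩
  | succ r _ ih =>
    obtain ⟨T, hYT, hTX, hTr, hTY⟩ := ih (by omega)
    obtain ⟨z, hzX, hzT, hz⟩ := exists_rk_insert_eq_add_one hTX hX (by omega)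
    refine ⟨insert z T, hYT.trans (Finset.subset_insert z T), Finset.insert_subset hzX hTX,
      by omega, ?_⟩
    rw [← hTY]
    simp only [nullity, Finset.card_insert_of_notMem hzT, hz]
    push_cast
    ring

end Extension

section CyclicCore

variable {T : Finset α}

lemma cyc_erase_of_rk_erase_eq (hT : T ⊆ M.E) {x : α} (hx : x ∈ T)
    (hco : M.rk (T.erase x) = M.rk T - 1) : M.cyc (T.erase x) = M.cyc T := by
  have hTx : T.erase x ⊆ M.E := (Finset.erase_subset x T).trans hT
  ext y
  simp only [cyc, Finset.mem_filter, Finset.mem_erase]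
  constructor
  · rintro ⟨⟨hyx, hyT⟩, hy⟩
    refine ⟨hyT, by_contra fun hne => ?_⟩
    have hTy := rk_erase_eq_sub_one hT hyT hne
    -- submodularity for `T \ x` and `T \ y` forces `ρ(T \ {x, y}) ≤ ρ(T) - 2`
    have hsub := M.rk_submod (T.erase x) (T.erase y) hTx ((Finset.erase_subset y T).trans hT)
    rw [show T.erase x ∪ T.erase y = T by ext; simp; grind,
      show T.erase x ∩ T.erase y = (T.erase x).erase y by ext; simp; tauto] at hsub
    omega
  · rintro ⟨hyT, hy⟩
    have hyx : y ≠ x := by rintro rfl; omega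
    have h₁ := rk_insert_le_add_one ((Finset.erase_subset x _).trans
      ((Finset.erase_subset y T).trans hT)) (hT hx)
    rw [Finset.insert_erase (Finset.mem_erase.2 ⟨hyx.symm, hx⟩), Finset.erase_right_comm] at h₁
    have h₂ := rk_erase_le hTx y
    exact ⟨⟨hyx, hyT⟩, by omega⟩

/-- Removing the coloops of `M|T` one at a time leaves the cyclic core, at constant nullity. -/
lemma cyclic_cyc_and_nullity_cyc (hT : T ⊆ M.E) :
    M.Cyclic (M.cyc T) ∧ M.nullity (M.cyc T) = M.nullity T := by
  induction T using Finset.strongInduction with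
  | _ T ih =>
    by_cases hall : M.cyc T = T
    · rw [hall]
      refine ⟨fun x hx => ?_, rfl⟩
      rw [← hall] at hx
      exact (Finset.mem_filter.1 hx).2
    obtain ⟨x, hxT, hxc⟩ := Finset.exists_of_ssubset
      (Finset.ssubset_iff_subset_ne.2 ⟨Finset.filter_subset _ T, hall⟩)
    have hco := rk_erase_eq_sub_one hT hxT fun h => hxc (Finset.mem_filter.2 ⟨hxT, h⟩)
    obtain ⟨hcyc, hnull⟩ := ih (T.erase x) (Finset.erase_ssubset hxT)
      ((Finset.erase_subset x T).trans hT)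
    rw [cyc_erase_of_rk_erase_eq hT hxT hco] at hcyc hnull
    refine ⟨hcyc, ?_⟩
    rw [hnull]
    simp only [nullity, hco, Finset.cast_card_erase_of_mem hxT]
    ring

end CyclicCore

lemma exists_mem_ZIn_nullity_ge {X T : Finset α} (hX : X ⊆ M.E) (hTX : T ⊆ X)
    (hT : M.rk T < M.rk X) : ∃ Y ∈ M.ZIn X, Y ≠ X ∧ M.nullity T ≤ M.nullity Y := by
  obtain ⟨hcyc, hnull⟩ := cyclic_cyc_and_nullity_cyc (hTX.trans hX)
  have hcT : M.cyc T ⊆ T := Finset.filter_subset _ T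
  have hcX : M.cyc T ⊆ X := hcT.trans hTX
  have hrk := rk_clIn hcX hX
  have hle : M.rk (M.cyc T) ≤ M.rk T := M.rk_mono _ _ hcT (hTX.trans hX)
  have hcard : (M.cyc T).card ≤ (M.clIn X (M.cyc T)).card :=
    Finset.card_le_card (subset_clIn hcX)
  refine ⟨_, clIn_mem_ZIn hcX hX hcyc, fun h => by rw [h] at hrk; omega, ?_⟩
  rw [← hnull]
  simp only [nullity, hrk]
  omega

section Distance

variable {X : Finset α}

lemma dist_le_card_sdiff {T : Finset α} (hTX : T ⊆ X) (hT : M.rk T < M.rk X) :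
    M.dist X ≤ (X \ T).card :=
  Nat.sInf_le ⟨X \ T, Finset.sdiff_subset, rfl, by rwa [Finset.sdiff_sdiff_eq_self hTX]⟩

lemma exists_card_eq_dist {T : Finset α} (hTX : T ⊆ X) (hT : M.rk T < M.rk X) :
    ∃ S ⊆ X, S.card = M.dist X ∧ M.rk (X \ S) < M.rk X :=
  Nat.sInf_mem (s := {m | ∃ S ⊆ X, S.card = m ∧ M.rk (X \ S) < M.rk X})
    ⟨_, X \ T, Finset.sdiff_subset, rfl, by rwa [Finset.sdiff_sdiff_eq_self hTX]⟩

end Distance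

end RankMatroid

theorem stmt10_general {α : Type} [DecidableEq α] (M : RankMatroid α)
    (X : Finset α) (hXE : X ⊆ M.E)
    (m : ℤ)
    (hm : IsGreatest {v : ℤ | ∃ Y ∈ M.ZIn X, Y ≠ X ∧ v = (Y.card : ℤ) - M.rk Y} m) :
    (M.dist X : ℤ) = (X.card : ℤ) - M.rk X + 1 - m := by
  obtain ⟨⟨Y, hY, hYX, rfl⟩, hmax⟩ := hm
  have hYlt := RankMatroid.rk_lt_of_mem_ZIn hXE hY hYX
  obtain ⟨T, -, hTX, hTrk, hTnull⟩ :=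
    RankMatroid.exists_superset_rk_eq (r := M.rk X - 1) hY.1 hXE (by omega) (by omega)
  have hTlt : M.rk T < M.rk X := by omega
  obtain ⟨S, hSX, hScard, hSrk⟩ := RankMatroid.exists_card_eq_dist hTX hTlt
  obtain ⟨Y', hY', hY'X, hnull⟩ :=
    RankMatroid.exists_mem_ZIn_nullity_ge hXE Finset.sdiff_subset hSrk
  have hupper := RankMatroid.dist_le_card_sdiff hTX hTlt
  have hlower := hmax ⟨Y', hY', hY'X, rfl⟩
  have hcardT : ((X \ T).card : ℤ) = X.card - T.card := Finset.cast_card_sdiff hTX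
  have hcardS : ((X \ S).card : ℤ) = X.card - S.card := Finset.cast_card_sdiff hSX
  simp only [RankMatroid.nullity] at hTnull hnull hlower
  omega

/-- For a nonempty cyclic set `X`,
`d_X = |X| − ρ(X) + 1 − max{η(Y) : Y ∈ Z(M|X), Y ≠ X}`. -/
theorem stmt10 {α : Type} [DecidableEq α] (M : RankMatroid α)
    (h0 : ∅ ∈ M.Z) (h1 : M.E ∈ M.Z)
    (X : Finset α) (hXE : X ⊆ M.E) (hXne : X.Nonempty) (hXcyc : M.Cyclic X)
    (m : ℤ)
    (hm : IsGreatest {v : ℤ | ∃ Y ∈ M.ZIn X, Y ≠ X ∧ v = (Y.card : ℤ) - M.rk Y} m) :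
    (M.dist X : ℤ) = (X.card : ℤ) - M.rk X + 1 - m :=
  stmt10_general M X hXE m hm
end
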